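/- In the generic-coding construction, for every x : Set ℕ and every i : ℕ, one has i ∈ x if and only if e i is an initial segment of x̃; thus x can be recovered from x̃ (and the family D). -/
import Mathlib


open scoped Classical

/-- `s` is an initial segment of `g : ℕ → Bool`: the finite partial function given by `s`
agrees with `g` on its domain. -/
def InitSeg (s : List Bool) (g : ℕ → Bool) : Prop :=
  ∀ k, (h : k < s.length) → s.get ⟨k, h⟩ = g k

/-- A set of binary strings is dense if every string has an extension in it,
where `s` extends `t` iff `t` is a prefix of `s`. -/
def DenseStrings (D : Set (List Bool)) : Prop :=
  ∀ t : List Bool, ∃ s ∈ D, t <+: s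

/-- `s` properly extends `t`: `t` is a proper prefix of `s`. -/
def ProperExt (s t : List Bool) : Prop := t <+: s ∧ t ≠ s

/-- Two strings are incompatible if neither is a prefix of the other. -/
def Incompat (s t : List Bool) : Prop := ¬s <+: t ∧ ¬t <+: s

/-- The minimal element of a set of strings: the one of least code under the canonical
(`Encodable`) encoding of `List Bool` into `ℕ` (junk value `[]` if the set is empty). -/
noncomputable def minString (S : Set (List Bool)) : List Bool :=
  ((Encodable.decode (sInf (Encodable.encode '' S)) : Option (List Bool))).getD []

/-- The recursively defined sequence of conditions `c i` coding `x` along the dense family `D`: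
`c 0 = []`; `e i` is the minimal element of `D i` properly extending `c i`;
`c (i+1) = e i` if `i ∈ x`, and otherwise `c (i+1)` is the minimal element of `D i`
properly extending `c i` and incompatible with `e i`. -/
noncomputable def cSeq (D : ℕ → Set (List Bool)) (x : Set ℕ) : ℕ → List Bool
  | 0 => []
  | i + 1 =>
    let ci := cSeq D x i
    let ei := minString {s ∈ D i | ProperExt s ci}
    if i ∈ x then ei
    else minString {s ∈ D i | ProperExt s ci ∧ Incompat s ei}

/-- `e i`: the minimal element of `D i` properly extending `c i`. -/
noncomputable def eSeq (D : ℕ → Set (List Bool)) (x : Set ℕ) (i : ℕ) : List Bool :=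
  minString {s ∈ D i | ProperExt s (cSeq D x i)}

/-- `x̃`: the unique function having every `c i` as an initial segment (when each `D i` is
dense, `c (i+1)` properly extends `c i`, so `c (k+1)` has length `> k` and determines bit `k`). -/
noncomputable def tilde (D : ℕ → Set (List Bool)) (x : Set ℕ) : ℕ → Bool :=
  fun k => (cSeq D x (k + 1)).getD k false

section Aux

lemma minString_mem {S : Set (List Bool)} (h : S.Nonempty) : minString S ∈ S := by
  obtain ⟨s, hs⟩ := h
  have hne : (Encodable.encode '' S).Nonempty := ⟨_, ⟨s, hs, rfl⟩⟩
  obtain ⟨t, ht, hts⟩ := Nat.sInf_mem hne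
  have heq : minString S = t := by
    unfold minString
    rw [← hts, Encodable.encodek]
    rfl
  rw [heq]; exact ht

lemma prefix_of_initSegs {s t : List Bool} {g : ℕ → Bool}
    (hs : InitSeg s g) (ht : InitSeg t g) (hl : s.length ≤ t.length) : s <+: t := by
  rw [List.prefix_iff_eq_take]
  apply List.ext_get (by simp [hl])
  intro n h1 h2
  have hn : n < s.length := h1
  have hnt : n < t.length := lt_of_lt_of_le hn hl
  have e1 := hs n hn
  have e2 := ht n hnt
  simp only [List.get_eq_getElem, List.getElem_take]
  simp only [List.get_eq_getElem] at e1 e2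
  rw [e1, e2]

lemma initSegs_comparable {s t : List Bool} {g : ℕ → Bool}
    (hs : InitSeg s g) (ht : InitSeg t g) : s <+: t ∨ t <+: s := by
  rcases le_total s.length t.length with h | h
  · exact Or.inl (prefix_of_initSegs hs ht h)
  · exact Or.inr (prefix_of_initSegs ht hs h)

lemma incompat_of_prefixes {u v s t : List Bool} (hu : u <+: s) (hv : v <+: t)
    (hlen : u.length = v.length) (hne : u ≠ v) : Incompat s t := by
  constructor
  · intro h
    apply hne
    have h1 : u <+: t := hu.trans h
    rw [List.prefix_iff_eq_take] at h1 hv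
    rw [h1, hv, hlen]
  · intro h
    apply hne
    have h2 : v <+: s := hv.trans h
    rw [List.prefix_iff_eq_take] at h2 hu
    rw [hu, h2, hlen]

lemma eSeq_spec (D : ℕ → Set (List Bool)) (hD : ∀ i, DenseStrings (D i))
    (x : Set ℕ) (i : ℕ) :
    eSeq D x i ∈ D i ∧ ProperExt (eSeq D x i) (cSeq D x i) := by
  have hne : ({s ∈ D i | ProperExt s (cSeq D x i)} : Set (List Bool)).Nonempty := by
    obtain ⟨s, hsD, hpre⟩ := hD i (cSeq D x i ++ [false])
    refine ⟨s, hsD, (List.prefix_append _ _).trans hpre, ?_⟩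
    intro h
    have := hpre.length_le
    simp [← h] at this
  exact minString_mem hne

lemma properExt_length_lt {s t : List Bool} (h : ProperExt s t) : t.length < s.length := by
  rcases h with ⟨hpre, hne⟩
  rcases lt_or_eq_of_le hpre.length_le with h | h
  · exact h
  · exact absurd (hpre.eq_of_length h) hne

lemma incompat_set_nonempty (D : ℕ → Set (List Bool)) (hD : ∀ i, DenseStrings (D i))
    (x : Set ℕ) (i : ℕ) :
    ({s ∈ D i | ProperExt s (cSeq D x i) ∧ Incompat s (eSeq D x i)} : Set (List Bool)).Nonempty := by
  set ci := cSeq D x i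
  set ei := eSeq D x i
  have hspec := eSeq_spec D hD x i
  have hlt : ci.length < ei.length := properExt_length_lt hspec.2
  set b := ei.get ⟨ci.length, hlt⟩
  have hcib : ci ++ [b] <+: ei := by
    have h1 : ci = ei.take ci.length := (List.prefix_iff_eq_take).mp hspec.2.1
    have h2 : ei.take (ci.length + 1) = ei.take ci.length ++ [b] := by
      rw [List.take_succ]
      congr 1
      rw [List.getElem?_eq_getElem hlt]
      rfl
    have : ci ++ [b] = ei.take (ci.length + 1) := by rw [h2, ← h1]
    rw [this]
    exact List.take_prefix _ _
  obtain ⟨s, hsD, hpre⟩ := hD i (ci ++ [!b])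
  refine ⟨s, hsD, ⟨(List.prefix_append _ _).trans hpre, ?_⟩, ?_⟩
  · intro h
    have := hpre.length_le
    simp [← h] at this
  · refine incompat_of_prefixes hpre hcib (by simp) ?_
    intro h
    have : (!b) = b := by
      have := congrArg (fun l => l.getD ci.length false) h
      simpa using this
    simp at this

lemma cSeq_succ_properExt (D : ℕ → Set (List Bool)) (hD : ∀ i, DenseStrings (D i))
    (x : Set ℕ) (i : ℕ) : ProperExt (cSeq D x (i + 1)) (cSeq D x i) := by
  by_cases hx : i ∈ x
  · have : cSeq D x (i + 1) = eSeq D x i := by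
      simp only [cSeq, eSeq, if_pos hx]
    rw [this]
    exact (eSeq_spec D hD x i).2
  · have : cSeq D x (i + 1) =
        minString {s ∈ D i | ProperExt s (cSeq D x i) ∧ Incompat s (eSeq D x i)} := by
      simp only [cSeq, eSeq, if_neg hx]
    rw [this]
    exact (minString_mem (incompat_set_nonempty D hD x i)).2.1

lemma cSeq_prefix (D : ℕ → Set (List Bool)) (hD : ∀ i, DenseStrings (D i))
    (x : Set ℕ) {i j : ℕ} (h : i ≤ j) : cSeq D x i <+: cSeq D x j := by
  induction j with
  | zero => simp_all
  | succ n ih =>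
    rcases Nat.lt_or_ge i (n + 1) with h' | h'
    · exact (ih (Nat.lt_succ_iff.mp h')).trans (cSeq_succ_properExt D hD x n).1
    · have : i = n + 1 := le_antisymm h h'
      rw [this]

lemma cSeq_length (D : ℕ → Set (List Bool)) (hD : ∀ i, DenseStrings (D i))
    (x : Set ℕ) (i : ℕ) : i ≤ (cSeq D x i).length := by
  induction i with
  | zero => simp
  | succ n ih =>
    have := properExt_length_lt (cSeq_succ_properExt D hD x n)
    omega

lemma initSeg_cSeq (D : ℕ → Set (List Bool)) (hD : ∀ i, DenseStrings (D i))
    (x : Set ℕ) (i : ℕ) : InitSeg (cSeq D x i) (tilde D x) := by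
  intro k hk
  have hk1 : k < (cSeq D x (k + 1)).length :=
    lt_of_lt_of_le (Nat.lt_succ_self k) (cSeq_length D hD x (k + 1))
  set m := max i (k + 1)
  have h1 : cSeq D x i <+: cSeq D x m := cSeq_prefix D hD x (le_max_left _ _)
  have h2 : cSeq D x (k + 1) <+: cSeq D x m := cSeq_prefix D hD x (le_max_right _ _)
  have hkm : k < (cSeq D x m).length := lt_of_lt_of_le hk h1.length_le
  have e1 : (cSeq D x i).get ⟨k, hk⟩ = (cSeq D x m).get ⟨k, hkm⟩ := by
    rcases h1 with ⟨r, hr⟩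
    simp only [List.get_eq_getElem, ← hr]
    rw [List.getElem_append_left]
  have e2 : (cSeq D x (k + 1)).get ⟨k, hk1⟩ = (cSeq D x m).get ⟨k, hkm⟩ := by
    rcases h2 with ⟨r, hr⟩
    simp only [List.get_eq_getElem, ← hr]
    rw [List.getElem_append_left]
  have e3 : tilde D x k = (cSeq D x (k + 1)).get ⟨k, hk1⟩ := by
    simp only [tilde, List.getD_eq_getElem _ _ hk1, List.get_eq_getElem]
  rw [e1, e3, e2]

end Aux
/-- For every `x` and `i`: `i ∈ x` iff `e i` is an initial segment of `x̃`; thus `x` can be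
recovered from `x̃` (and the family `D`). -/
theorem mem_iff_eSeq_initSeg_tilde (D : ℕ → Set (List Bool)) (hD : ∀ i, DenseStrings (D i))
    (x : Set ℕ) (i : ℕ) :
    i ∈ x ↔ InitSeg (eSeq D x i) (tilde D x) := by
  constructor
  · intro hx
    have : cSeq D x (i + 1) = eSeq D x i := by
      simp only [cSeq, eSeq, if_pos hx]
    rw [← this]
    exact initSeg_cSeq D hD x (i + 1)
  · intro h
    by_contra hx
    have hc : cSeq D x (i + 1) =
        minString {s ∈ D i | ProperExt s (cSeq D x i) ∧ Incompat s (eSeq D x i)} := by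
      simp only [cSeq, eSeq, if_neg hx]
    have hmem := minString_mem (incompat_set_nonempty D hD x i)
    rw [← hc] at hmem
    have hinc : Incompat (cSeq D x (i + 1)) (eSeq D x i) := hmem.2.2
    have hcs : InitSeg (cSeq D x (i + 1)) (tilde D x) := initSeg_cSeq D hD x (i + 1)
    rcases initSegs_comparable hcs h with hp | hp
    · exact hinc.1 hp
    · exact hinc.2 hp
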